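/- Let k ≥ 1, 1 ≤ r ≤ k, and let f : {0,...,k}^U → ℝ≥0 be submodular in every orthant and r-wise monotone. Let s be the solution produced on f by the deterministic greedy algorithm (which processes the elements of U in a fixed order, assigning each element e the value i maximizing the marginal f(s + i·1_e) − f(s), breaking ties by smallest i). Then (1+r)·f(s) ≥ f(o) for every o ∈ {0,...,k}^U. -/
import Mathlib


/-- min₀: coordinate-wise operation. -/
def min0 {k : ℕ} (a b : Fin (k+1)) : Fin (k+1) :=
  if a ≠ 0 ∧ b ≠ 0 ∧ a ≠ b then 0 else min a b

/-- max₀: coordinate-wise operation. -/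
def max0 {k : ℕ} (a b : Fin (k+1)) : Fin (k+1) :=
  if a ≠ 0 ∧ b ≠ 0 ∧ a ≠ b then 0 else max a b

/-- k-submodularity. -/
def kSubmodular {U : Type*} {k : ℕ} (f : (U → Fin (k+1)) → ℝ) : Prop :=
  ∀ s t : U → Fin (k+1),
    f (fun e => min0 (s e) (t e)) + f (fun e => max0 (s e) (t e)) ≤ f s + f t

/-- restriction of a vector to a finset. -/
def restrict {U : Type*} [DecidableEq U] {k : ℕ} (x : U → Fin (k+1)) (S : Finset U) :
    U → Fin (k+1) := fun e => if e ∈ S then x e else 0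

/-- submodular in every orthant. -/
def SubmodularEveryOrthant {U : Type*} {k : ℕ} (f : (U → Fin (k+1)) → ℝ) : Prop :=
  ∀ a b : U → Fin (k+1), (∀ e, a e ≠ 0 → b e ≠ 0 → a e = b e) →
    f (fun e => min0 (a e) (b e)) + f (fun e => max0 (a e) (b e)) ≤ f a + f b

/-- r-wise monotonicity. -/
def RWiseMonotone {U : Type*} [DecidableEq U] {k : ℕ} (r : ℕ)
    (f : (U → Fin (k+1)) → ℝ) : Prop :=
  ∀ (s : U → Fin (k+1)) (e : U), s e = 0 →
    ∀ I : Finset (Fin (k+1)), I.card = r → (0 : Fin (k+1)) ∉ I →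
      0 ≤ ∑ i ∈ I, (f (Function.update s e i) - f s)

lemma min0_self {k : ℕ} (a : Fin (k+1)) : min0 a a = a := by simp [min0]
lemma max0_self {k : ℕ} (a : Fin (k+1)) : max0 a a = a := by simp [max0]
lemma min0_zero_left {k : ℕ} (a : Fin (k+1)) : min0 0 a = 0 := by
  simp [min0, Fin.le_def]
lemma min0_zero_right {k : ℕ} (a : Fin (k+1)) : min0 a 0 = 0 := by
  simp [min0, Fin.le_def]
lemma max0_zero_left {k : ℕ} (a : Fin (k+1)) : max0 0 a = a := by
  simp [max0, Fin.le_def]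
lemma max0_zero_right {k : ℕ} (a : Fin (k+1)) : max0 a 0 = a := by
  simp [max0, Fin.le_def]
lemma star {n k : ℕ} (f : (Fin n → Fin (k+1)) → ℝ)
    (hsub : SubmodularEveryOrthant f)
    (t u : Fin n → Fin (k+1)) (e : Fin n)
    (hte : t e = 0) (hue : u e = 0)
    (hcomp : ∀ e', t e' ≠ 0 → t e' = u e')
    (i : Fin (k+1)) :
    f (Function.update u e i) - f u ≤ f (Function.update t e i) - f t := by
  have h := hsub (Function.update t e i) u ?_
  · have hmin : (fun e' => min0 (Function.update t e i e') (u e')) = t := by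
      funext e'
      by_cases he : e' = e
      · subst he; simp [hue, min0_zero_right, hte]
      · rw [Function.update_of_ne he]
        by_cases ht : t e' = 0
        · rw [ht, min0_zero_left]
        · rw [← hcomp e' ht, min0_self]
    have hmax : (fun e' => max0 (Function.update t e i e') (u e')) =
        Function.update u e i := by
      funext e'
      by_cases he : e' = e
      · subst he; simp [hue, max0_zero_right]
      · rw [Function.update_of_ne he, Function.update_of_ne he]
        by_cases ht : t e' = 0
        · rw [ht, max0_zero_left]
        · rw [← hcomp e' ht, max0_self, hcomp e' ht]
    rw [hmin, hmax] at h
    linarith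
  · intro e' ha hb
    by_cases he : e' = e
    · subst he; simp [hue] at hb
    · rw [Function.update_of_ne he] at ha ⊢
      exact hcomp e' ha

lemma step_ineq {n k r : ℕ} (hr : 1 ≤ r) (hrk : r ≤ k)
    (f : (Fin n → Fin (k+1)) → ℝ)
    (hsub : SubmodularEveryOrthant f) (hmono : RWiseMonotone r f)
    (t u : Fin n → Fin (k+1)) (e : Fin n) (q p : Fin (k+1))
    (hte : t e = 0) (hue : u e = 0)
    (hcomp : ∀ e', t e' ≠ 0 → t e' = u e')
    (hq : q ≠ 0)
    (hmax : ∀ i : Fin (k+1), i ≠ 0 →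
      f (Function.update t e i) ≤ f (Function.update t e q)) :
    f (Function.update u e p) - f (Function.update u e q)
      ≤ r * (f (Function.update t e q) - f t) := by
  set Δ : ℝ := f (Function.update t e q) - f t with hΔ
  -- choose I : r-subset of nonzero values containing q
  obtain ⟨I, hqI, hIsub, hIcard⟩ :
      ∃ I : Finset (Fin (k+1)), {q} ⊆ I ∧ I ⊆ Finset.univ \ {0} ∧ I.card = r := by
    apply Finset.exists_subsuperset_card_eq
    · simp [hq]
    · simpa using hr
    · rw [Finset.card_sdiff_of_subset (by simp)]
      simpa using hrk
  have hqI' : q ∈ I := hqI (by simp)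
  have h0I : (0 : Fin (k+1)) ∉ I := by
    intro h; have := hIsub h; simp at this
  have hInz : ∀ i ∈ I, i ≠ 0 := by
    intro i hi h; exact h0I (h ▸ hi)
  -- each marginal at u bounded by Δ
  have hstar : ∀ i : Fin (k+1), i ≠ 0 →
      f (Function.update u e i) - f u ≤ Δ := by
    intro i hi
    calc f (Function.update u e i) - f u
        ≤ f (Function.update t e i) - f t := star f hsub t u e hte hue hcomp i
      _ ≤ Δ := by rw [hΔ]; linarith [hmax i hi]
  -- Δ ≥ 0
  have hΔ0 : 0 ≤ Δ := by
    have hm := hmono t e hte I hIcard h0I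
    have hb : ∑ i ∈ I, (f (Function.update t e i) - f t) ≤ ∑ i ∈ I, Δ := by
      apply Finset.sum_le_sum
      intro i hi
      rw [hΔ]; linarith [hmax i (hInz i hi)]
    rw [Finset.sum_const, hIcard, nsmul_eq_mul] at hb
    have hr' : (1:ℝ) ≤ (r:ℝ) := by exact_mod_cast hr
    nlinarith [hm, hb, hr']
  -- r-wise monotonicity at u
  have hm := hmono u e hue I hIcard h0I
  rw [← Finset.add_sum_erase _ _ hqI'] at hm
  have herase : ∑ i ∈ I.erase q, (f (Function.update u e i) - f u)
      ≤ (r - 1 : ℝ) * Δ := by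
    have hb : ∑ i ∈ I.erase q, (f (Function.update u e i) - f u)
        ≤ ∑ _i ∈ I.erase q, Δ :=
      Finset.sum_le_sum fun i hi => hstar i (hInz i (Finset.mem_of_mem_erase hi))
    rw [Finset.sum_const, Finset.card_erase_of_mem hqI', hIcard, nsmul_eq_mul] at hb
    have : ((r - 1 : ℕ) : ℝ) = (r : ℝ) - 1 := by
      rw [Nat.cast_sub hr]; simp
    rw [this] at hb
    exact hb
  -- bound on first term
  have hA : f (Function.update u e p) - f u ≤ Δ := by
    by_cases hp : p = 0
    · subst hp
      rw [show Function.update u e 0 = u by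
        funext e'; by_cases he : e' = e
        · subst he; simp [hue]
        · rw [Function.update_of_ne he]]
      linarith
    · exact hstar p hp
  -- combine
  have : f u - f (Function.update u e q) ≤ (r - 1 : ℝ) * Δ := by linarith
  nlinarith [hA, this]


theorem stmt_12 {n k r : ℕ} (hk : 1 ≤ k) (hr : 1 ≤ r) (hrk : r ≤ k)
    (f : (Fin n → Fin (k+1)) → ℝ) (hnn : ∀ s, 0 ≤ f s)
    (hsub : SubmodularEveryOrthant f) (hmono : RWiseMonotone r f)
    (s : Fin n → Fin (k+1))
    -- s is the output of the deterministic greedy algorithm: there is an order π on the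
    -- elements and a sequence of partial solutions g 0 = 0, ..., g n = s, where at step j
    -- the element π j is assigned the value q maximizing the marginal gain, ties broken
    -- by the smallest such value.
    (hgreedy : ∃ (π : Fin n ≃ Fin n) (g : ℕ → Fin n → Fin (k+1)),
      g 0 = (fun _ => 0) ∧ s = g n ∧
      ∀ j : Fin n, ∃ q : Fin (k+1), q ≠ 0 ∧
        (∀ i : Fin (k+1), i ≠ 0 →
          f (Function.update (g j) (π j) i) ≤ f (Function.update (g j) (π j) q)) ∧
        (∀ i : Fin (k+1), i ≠ 0 →
          f (Function.update (g j) (π j) i) = f (Function.update (g j) (π j) q) → q ≤ i) ∧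
        g (j + 1) = Function.update (g j) (π j) q) :
    ∀ o : Fin n → Fin (k+1), f o ≤ (1 + r : ℝ) * f s := by
  obtain ⟨π, g, hg0, hs, hstep⟩ := hgreedy
  intro o
  choose Q hQnz hQmax hQtie hQupd using hstep
  -- unprocessed coordinates are zero
  have hzero : ∀ j : ℕ, j ≤ n → ∀ e : Fin n, j ≤ (π.symm e : ℕ) → g j e = 0 := by
    intro j
    induction j with
    | zero => intro _ e _; rw [hg0]
    | succ j ih =>
      intro hj e hje
      have hjn : j < n := by omega
      have hupd := hQupd ⟨j, hjn⟩
      simp only [Fin.val_mk] at hupd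
      have hne : e ≠ π ⟨j, hjn⟩ := by
        intro h
        rw [h, Equiv.symm_apply_apply] at hje
        simp only [Fin.val_mk] at hje
        omega
      rw [hupd, Function.update_of_ne hne]
      exact ih (by omega) e (by omega)
  -- processed coordinates stay fixed
  have hagree : ∀ m : ℕ, m ≤ n → ∀ j : ℕ, j ≤ m → ∀ e : Fin n,
      (π.symm e : ℕ) < j → g m e = g j e := by
    intro m
    induction m with
    | zero => intro _ j hj e he; exact absurd he (by omega)
    | succ m ih =>
      intro hmn j hj e he
      by_cases h : j = m + 1
      · subst h; rfl
      · have h1 : m < n := by omega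
        have hupd := hQupd ⟨m, h1⟩
        simp only [Fin.val_mk] at hupd
        have hne : e ≠ π ⟨m, h1⟩ := by
          intro hc
          rw [hc, Equiv.symm_apply_apply] at he
          simp only [Fin.val_mk] at he
          omega
        rw [hupd, Function.update_of_ne hne]
        exact ih (by omega) j (by omega) e he
  -- explicit form of g j
  have hgj : ∀ j : ℕ, j ≤ n → ∀ e : Fin n,
      g j e = if (π.symm e : ℕ) < j then s e else 0 := by
    intro j hj e
    by_cases h : (π.symm e : ℕ) < j
    · rw [if_pos h, hs]
      exact (hagree n le_rfl j hj e h).symm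
    · rw [if_neg h]
      exact hzero j hj e (by omega)
  -- hybrid solution
  set v : ℕ → Fin n → Fin (k+1) :=
    fun j e => if (π.symm e : ℕ) < j then s e else o e with hv
  have hv0 : v 0 = o := by funext e; simp [hv]
  have hvn : v n = s := by
    funext e; simp only [hv]; rw [if_pos (π.symm e).is_lt]
  -- per-step inequality
  have key : ∀ j : ℕ, j < n →
      f (v j) - f (v (j+1)) ≤ r * (f (g (j+1)) - f (g j)) := by
    intro j hj
    set e : Fin n := π ⟨j, hj⟩ with he
    have hsymme : (π.symm e : ℕ) = j := by rw [he, Equiv.symm_apply_apply]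
    set t : Fin n → Fin (k+1) := g j with ht
    set u : Fin n → Fin (k+1) := Function.update (v j) e 0 with hu
    have hte : t e = 0 := by
      rw [ht, hgj j (by omega) e, if_neg (by omega)]
    have hue : u e = 0 := by rw [hu, Function.update_self]
    have hcomp : ∀ e', t e' ≠ 0 → t e' = u e' := by
      intro e' hne
      rw [ht, hgj j (by omega) e'] at hne ⊢
      by_cases h : (π.symm e' : ℕ) < j
      · rw [if_pos h]
        have hee : e' ≠ e := by intro hc; rw [hc, hsymme] at h; omega
        rw [hu, Function.update_of_ne hee]
        simp only [hv]
        rw [if_pos h]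
      · rw [if_neg h] at hne; exact absurd rfl hne
    have hupd := hQupd ⟨j, hj⟩
    simp only [Fin.val_mk] at hupd
    have hvj : v j = Function.update u e (o e) := by
      funext e'
      by_cases hee : e' = e
      · subst hee
        rw [Function.update_self]
        simp only [hv]
        rw [if_neg (by omega)]
      · rw [Function.update_of_ne hee, hu, Function.update_of_ne hee]
    have hse : s e = Q ⟨j, hj⟩ := by
      rw [hs, hagree n le_rfl (j+1) (by omega) e (by omega), hupd,
        Function.update_self]
    have hvj1 : v (j+1) = Function.update u e (Q ⟨j, hj⟩) := by
      funext e'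
      by_cases hee : e' = e
      · subst hee
        rw [Function.update_self]
        simp only [hv]
        rw [if_pos (by omega), hse]
      · rw [Function.update_of_ne hee, hu, Function.update_of_ne hee]
        simp only [hv]
        have : (π.symm e' : ℕ) ≠ j := by
          intro hc
          apply hee
          have : π.symm e' = π.symm e := Fin.ext (by rw [hc, hsymme])
          exact π.symm.injective this
        by_cases h : (π.symm e' : ℕ) < j
        · rw [if_pos h, if_pos (by omega)]
        · rw [if_neg h, if_neg (by omega)]
    have hg1 : g (j+1) = Function.update t e (Q ⟨j, hj⟩) := hupd
    rw [hvj, hvj1, hg1]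
    exact step_ineq hr hrk f hsub hmono t u e (Q ⟨j, hj⟩) (o e) hte hue hcomp
      (hQnz ⟨j, hj⟩) (hQmax ⟨j, hj⟩)
  -- telescoping
  have htel : f (v 0) - f (v n) ≤ r * (f (g n) - f (g 0)) := by
    have h1 : ∑ j ∈ Finset.range n, (f (v j) - f (v (j+1))) = f (v 0) - f (v n) :=
      Finset.sum_range_sub' (fun j => f (v j)) n
    have h2 : ∑ j ∈ Finset.range n, (f (g (j+1)) - f (g j)) = f (g n) - f (g 0) :=
      Finset.sum_range_sub (fun j => f (g j)) n
    calc f (v 0) - f (v n) = ∑ j ∈ Finset.range n, (f (v j) - f (v (j+1))) := h1.symm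
      _ ≤ ∑ j ∈ Finset.range n, (r : ℝ) * (f (g (j+1)) - f (g j)) :=
          Finset.sum_le_sum fun j hj => key j (Finset.mem_range.mp hj)
      _ = r * (f (g n) - f (g 0)) := by rw [← Finset.mul_sum, h2]
  rw [hv0, hvn, ← hs] at htel
  have h0 : 0 ≤ f (g 0) := hnn _
  have hr' : (0:ℝ) ≤ (r:ℝ) := by positivity
  nlinarith [htel, h0, hr']
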